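/- Let G be a finite group with supercharacter theory S such that G is not S-abelian (Z(S) ≠ G). If (G,N) is an S-GCP, then Z(S) ≤ N. -/

import Mathlib

open scoped BigOperators Pointwise

/-- `f : G → ℂ` is an irreducible character of `G`. -/
def IsIrrChar (G : Type) [Group G] [Fintype G] (f : G → ℂ) : Prop :=
  ∃ V : FDRep ℂ G, CategoryTheory.Simple V ∧ V.character = f

/-- A supercharacter theory of a finite group `G` (Diaconis–Isaacs): a partition
`parts` of the set of irreducible characters of `G` together with a partition of `G`
into `S`-classes (`cls g` is the class of `g`), such that `{1}` is a class, the number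
of parts equals the number of classes, and each supercharacter
`σ_X = ∑ χ ∈ X, χ(1)·χ` is constant on every class. -/
structure SCT (G : Type) [Group G] [Fintype G] where
  parts : Finset (Finset (G → ℂ))
  cls : G → Set G
  parts_cover : ∀ f : G → ℂ, IsIrrChar G f ↔ ∃ X ∈ parts, f ∈ X
  parts_disj : ∀ X ∈ parts, ∀ Y ∈ parts, X ≠ Y → Disjoint X Y
  parts_nonempty : ∀ X ∈ parts, X.Nonempty
  mem_cls : ∀ g : G, g ∈ cls g
  cls_eq : ∀ g h : G, h ∈ cls g → cls h = cls g
  cls_one : cls (1 : G) = {1}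
  card_eq : parts.card = Nat.card (Set.range cls)
  const : ∀ X ∈ parts, ∀ g h : G, h ∈ cls g →
    (∑ χ ∈ X, χ 1 * χ h) = (∑ χ ∈ X, χ 1 * χ g)

variable {G : Type} [Group G] [Fintype G]

namespace SCT

/-- The supercharacter attached to a part `X`. -/
noncomputable def superchar (_S : SCT G) (X : Finset (G → ℂ)) : G → ℂ := fun g => ∑ χ ∈ X, χ 1 * χ g

/-- The set `Irr(S)` of `S`-characters. -/
def Irr (S : SCT G) : Set (G → ℂ) := {f | ∃ X ∈ S.parts, f = S.superchar X}

end SCT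

/-- The kernel of a character-like function `f : G → ℂ`. -/
def charKer (f : G → ℂ) : Subgroup G where
  carrier := {g | ∀ h, f (g * h) = f h}
  one_mem' := by intro h; simp
  mul_mem' := by intro a b ha hb h; rw [mul_assoc, ha, hb]
  inv_mem' := by
    intro a ha h
    have := ha (a⁻¹ * h)
    rw [mul_inv_cancel_left] at this
    exact this.symm

namespace SCT

/-- `[H,S]`, the subgroup generated by the `g⁻¹k` with `g ∈ H`, `k ∈ Cl_S(g)`. -/
def comm (S : SCT G) (H : Subgroup G) : Subgroup G :=
  Subgroup.closure {x | ∃ g ∈ H, ∃ k ∈ S.cls g, x = g⁻¹ * k}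

/-- `[G,S]`. -/
def derived (S : SCT G) : Subgroup G := S.comm ⊤

/-- `Irr(S | N)`: the `S`-characters whose kernel does not contain `N`. -/
def IrrRel (S : SCT G) (N : Subgroup G) : Set (G → ℂ) :=
  {f | f ∈ S.Irr ∧ ¬ N ≤ charKer f}

/-- `g` is an `S`-Camina element: all of `Irr(S | [G,S])` vanishes at `g`. -/
def IsCaminaElt (S : SCT G) (g : G) : Prop :=
  ∀ f ∈ S.IrrRel S.derived, f g = 0

/-- `N` is `S`-normal: a union of `S`-classes. -/
def IsNormal (S : SCT G) (N : Subgroup G) : Prop :=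
  ∀ g ∈ N, S.cls g ⊆ N

/-- `(G,N)` is a generalised `S`-Camina pair. -/
def IsGCP (S : SCT G) (N : Subgroup G) : Prop :=
  S.IsNormal N ∧ ∀ g : G, g ∉ N → S.IsCaminaElt g

/-- The set `Z(S)` of elements with singleton `S`-class. -/
def centerSet (S : SCT G) : Set G := {g | S.cls g = {g}}

/-- The vanishing-off subgroup `V(S | N)`. -/
def V (S : SCT G) (N : Subgroup G) : Subgroup G :=
  Subgroup.closure {g | ∃ f ∈ S.IrrRel N, f g ≠ 0}

/-- `V(S) = V(S | [G,S])`. -/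
def VS (S : SCT G) : Subgroup G := S.V S.derived

/-- `U(S | N)`: the product of all `S`-normal subgroups `H` with `V(S | H) ≤ N`. -/
def U (S : SCT G) (N : Subgroup G) : Subgroup G :=
  ⨆ (H : Subgroup G) (_ : S.IsNormal H ∧ S.V H ≤ N), H

/-- The upper `S`-central series: `ζ_0 = 1` and `ζ_{i+1}/ζ_i = Z(S^{G/ζ_i})`,
i.e. `ζ_{i+1}` consists of the `g` whose `S`-class maps onto the single coset `gζ_i`. -/
def zeta (S : SCT G) : ℕ → Subgroup G
  | 0 => ⊥
  | i + 1 => Subgroup.closure {g | ∀ k ∈ S.cls g, g⁻¹ * k ∈ S.zeta i}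

/-- The lower `S`-central series `γ_1 = G`, `γ_{i+1} = [γ_i, S]` (with `γ_0 := G`). -/
def gamma (S : SCT G) : ℕ → Subgroup G
  | 0 => ⊤
  | 1 => ⊤
  | n + 2 => S.comm (S.gamma (n + 1))

/-- The series `V_1(S) = V(S)`, `V_{i+1}(S) = [V_i(S), S]` (with `V_0 := V(S)`). -/
def Vseq (S : SCT G) : ℕ → Subgroup G
  | 0 => S.VS
  | 1 => S.VS
  | n + 2 => S.comm (S.Vseq (n + 1))

/-- `G` is a `VZ(S)`-group: every member of `Irr(S | [G,S])` vanishes off `Z(S)`. -/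
def IsVZ (S : SCT G) : Prop :=
  ∀ f ∈ S.IrrRel S.derived, ∀ g : G, g ∉ S.centerSet → f g = 0

end SCT

/-! The supercharacters form a basis of the space of functions constant on `S`-classes,
orthogonal for `⟨f, h⟩ = ∑ g, f g * h g⁻¹`. Expanding the indicator of a singleton class `{z}`
in this basis and evaluating at `z` gives `|G| = ∑ σ(z⁻¹) σ(z) / σ(1)`; since also
`|G| = ∑ σ(1)` and `|σ(g)| ≤ σ(1)`, every supercharacter satisfies `|σ(z)| = σ(1) ≠ 0` on `Z(S)`.
So an element of `Z(S)` outside `N`, being an `S`-Camina element, forces `[G,S]` into the kernel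
of every supercharacter. Supercharacters separate `S`-classes and `{1}` is a class, hence
`[G,S] = 1` and `G` would be `S`-abelian. -/

theorem Module.End.norm_trace_le_finrank_of_pow_eq_one {V : Type*} [AddCommGroup V] [Module ℂ V]
    [FiniteDimensional ℂ V] (f : Module.End ℂ V) {n : ℕ} (hn : n ≠ 0) (hf : f ^ n = 1) :
    ‖LinearMap.trace ℂ V f‖ ≤ Module.finrank ℂ V := by
  have hroot : ∀ μ ∈ f.charpoly.roots, ‖μ‖ = 1 := fun μ hμ => by
    obtain ⟨v, hv⟩ := ((Module.End.hasEigenvalue_iff_isRoot_charpoly f μ).2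
      (Polynomial.isRoot_of_mem_roots hμ)).pow n |>.exists_hasEigenvector
    have hμn : (μ ^ n - 1) • v = 0 := by
      rw [sub_smul, ← hv.apply_eq_smul, hf, one_smul, Module.End.one_apply, sub_self]
    exact Complex.norm_eq_one_of_pow_eq_one
      (sub_eq_zero.1 ((smul_eq_zero.1 hμn).resolve_right hv.2)) hn
  rw [Module.End.trace_eq_sum_roots_charpoly_of_splits (IsAlgClosed.splits _)]
  calc ‖f.charpoly.roots.sum‖ ≤ (f.charpoly.roots.map (‖·‖)).sum := norm_multiset_sum_le _
    _ ≤ (f.charpoly.roots.map (‖·‖)).card • (1 : ℝ) :=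
      Multiset.sum_le_card_nsmul _ _ fun r hr => by
        obtain ⟨μ, hμ, rfl⟩ := Multiset.mem_map.1 hr
        exact (hroot μ hμ).le
    _ = Module.finrank ℂ V := by
      rw [Multiset.card_map, IsAlgClosed.card_roots_eq_natDegree, LinearMap.charpoly_natDegree,
        nsmul_one]

theorem FDRep.norm_character_le {G : Type*} [Group G] [Fintype G] (V : FDRep ℂ G) (g : G) :
    ‖V.character g‖ ≤ Module.finrank ℂ V :=
  Module.End.norm_trace_le_finrank_of_pow_eq_one (V.ρ g) Fintype.card_ne_zero
    (by rw [← map_pow, pow_card_eq_one, map_one])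

namespace IsIrrChar

variable {f h : G → ℂ}

theorem apply_one_eq_norm (hf : IsIrrChar G f) : f 1 = ‖f 1‖ := by
  obtain ⟨V, -, rfl⟩ := hf
  simp

theorem norm_apply_le (hf : IsIrrChar G f) (g : G) : ‖f g‖ ≤ ‖f 1‖ := by
  obtain ⟨V, -, rfl⟩ := hf
  simpa using FDRep.norm_character_le V g

open scoped Classical in
theorem sum_mul_apply_inv (hf : IsIrrChar G f) (hh : IsIrrChar G h) :
    ∑ g, f g * h g⁻¹ = if f = h then (Fintype.card G : ℂ) else 0 := by
  obtain ⟨V, hV, rfl⟩ := hf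
  obtain ⟨W, hW, rfl⟩ := hh
  let : Invertible (Nat.card G : ℂ) := invertibleOfNonzero (by simp)
  have hcard : (Nat.card G : ℂ) ≠ 0 := by simp
  by_cases hchar : V.character = W.character
  · have hVV := FDRep.char_orthonormal V V
    rw [if_pos ⟨CategoryTheory.Iso.refl V⟩, inv_mul_eq_iff_eq_mul₀ hcard] at hVV
    simpa [← hchar] using hVV
  · have hVW := FDRep.char_orthonormal V W
    rw [if_neg fun ⟨i⟩ => hchar (FDRep.char_iso i), inv_mul_eq_iff_eq_mul₀ hcard] at hVW
    simpa [hchar] using hVW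

theorem apply_one_ne_zero (hf : IsIrrChar G f) : f 1 ≠ 0 := by
  intro h1
  have hsum := hf.sum_mul_apply_inv hf
  rw [if_pos rfl] at hsum
  have hzero : ∀ g, f g = 0 := fun g => norm_eq_zero.1 <| le_antisymm
    ((hf.norm_apply_le g).trans (by simp [h1])) (norm_nonneg _)
  simp [hzero] at hsum
  exact Fintype.card_ne_zero (by exact_mod_cast hsum.symm)

end IsIrrChar

namespace SCT

variable (S : SCT G) {X Y : Finset (G → ℂ)}

theorem isIrrChar_of_mem (hX : X ∈ S.parts) {χ : G → ℂ} (hχ : χ ∈ X) : IsIrrChar G χ :=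
  (S.parts_cover χ).2 ⟨X, hX, hχ⟩

theorem mem_cls_iff_cls_eq {a g : G} : g ∈ S.cls a ↔ S.cls g = S.cls a :=
  ⟨S.cls_eq a g, fun h => h ▸ S.mem_cls g⟩

theorem superchar_one_eq_sum_norm_sq (hX : X ∈ S.parts) :
    S.superchar X 1 = ((∑ χ ∈ X, ‖χ 1‖ ^ 2 : ℝ) : ℂ) := by
  push_cast
  refine Finset.sum_congr rfl fun χ hχ => ?_
  rw [sq, ← (S.isIrrChar_of_mem hX hχ).apply_one_eq_norm]

theorem superchar_one_eq_norm (hX : X ∈ S.parts) : S.superchar X 1 = ‖S.superchar X 1‖ := by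
  rw [S.superchar_one_eq_sum_norm_sq hX, Complex.norm_of_nonneg (by positivity)]

theorem norm_superchar_le (hX : X ∈ S.parts) (g : G) : ‖S.superchar X g‖ ≤ ‖S.superchar X 1‖ :=
  calc ‖S.superchar X g‖ ≤ ∑ χ ∈ X, ‖χ 1‖ * ‖χ g‖ := (norm_sum_le _ _).trans_eq (by simp)
    _ ≤ ∑ χ ∈ X, ‖χ 1‖ ^ 2 := Finset.sum_le_sum fun χ hχ => by
        rw [sq]
        exact mul_le_mul_of_nonneg_left ((S.isIrrChar_of_mem hX hχ).norm_apply_le g)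
          (norm_nonneg _)
    _ = ‖S.superchar X 1‖ := by
        rw [S.superchar_one_eq_sum_norm_sq hX, Complex.norm_of_nonneg (by positivity)]

theorem superchar_one_ne_zero (hX : X ∈ S.parts) : S.superchar X 1 ≠ 0 := by
  obtain ⟨χ, hχ⟩ := S.parts_nonempty X hX
  rw [S.superchar_one_eq_sum_norm_sq hX, Complex.ofReal_ne_zero]
  refine (Finset.sum_pos' (fun _ _ => by positivity) ⟨χ, hχ, ?_⟩).ne'
  exact pow_pos (norm_pos_iff.2 (S.isIrrChar_of_mem hX hχ).apply_one_ne_zero) 2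

open scoped Classical in
theorem sum_superchar_mul_superchar_inv (hX : X ∈ S.parts) (hY : Y ∈ S.parts) :
    ∑ g, S.superchar X g * S.superchar Y g⁻¹ =
      if X = Y then (Fintype.card G : ℂ) * S.superchar X 1 else 0 := by
  have hexpand : ∑ g, S.superchar X g * S.superchar Y g⁻¹ =
      ∑ χ ∈ X, ∑ ψ ∈ Y, χ 1 * ψ 1 * ∑ g, χ g * ψ g⁻¹ := by
    simp only [superchar, Finset.sum_mul, Finset.mul_sum]
    rw [Finset.sum_comm (s := X), Finset.sum_comm (s := Finset.univ)]
    refine Finset.sum_congr rfl fun ψ _ => ?_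
    rw [Finset.sum_comm]
    exact Finset.sum_congr rfl fun χ _ => Finset.sum_congr rfl fun g _ => by ring
  rw [hexpand]
  split_ifs with hXY
  · subst hXY
    rw [superchar, Finset.mul_sum]
    refine Finset.sum_congr rfl fun χ hχ => ?_
    rw [Finset.sum_eq_single χ]
    · rw [(S.isIrrChar_of_mem hX hχ).sum_mul_apply_inv (S.isIrrChar_of_mem hX hχ), if_pos rfl]
      ring
    · intro ψ hψ hψχ
      rw [(S.isIrrChar_of_mem hX hχ).sum_mul_apply_inv (S.isIrrChar_of_mem hX hψ),
        if_neg (Ne.symm hψχ), mul_zero]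
    · exact fun h => absurd hχ h
  · refine Finset.sum_eq_zero fun χ hχ => Finset.sum_eq_zero fun ψ hψ => ?_
    have hχψ : χ ≠ ψ := fun h =>
      Finset.disjoint_left.1 (S.parts_disj X hX Y hY hXY) hχ (h ▸ hψ)
    rw [(S.isIrrChar_of_mem hX hχ).sum_mul_apply_inv (S.isIrrChar_of_mem hY hψ), if_neg hχψ,
      mul_zero]

def classFun : Submodule ℂ (G → ℂ) where
  carrier := {f | ∀ g, ∀ h ∈ S.cls g, f h = f g}
  add_mem' hf hf' g h hh := by simp only [Pi.add_apply, hf g h hh, hf' g h hh]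
  zero_mem' _ _ _ := rfl
  smul_mem' c _ hf g h hh := by simp only [Pi.smul_apply, hf g h hh]

theorem mem_classFun {f : G → ℂ} : f ∈ S.classFun ↔ ∀ g, ∀ h ∈ S.cls g, f h = f g :=
  Iff.rfl

theorem superchar_mem_classFun (hX : X ∈ S.parts) :
    S.superchar X ∈ S.classFun :=
  S.const X hX

theorem indicator_cls_mem_classFun (a : G) : (S.cls a).indicator 1 ∈ S.classFun := by
  refine S.mem_classFun.2 fun g h hh => ?_
  classical
  simp only [Set.indicator_apply, S.mem_cls_iff_cls_eq, S.cls_eq g h hh, Pi.one_apply]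

theorem finrank_classFun : Module.finrank ℂ S.classFun = S.parts.card := by
  classical
  have hπ : Function.Surjective (Set.rangeFactorization S.cls) :=
    Set.rangeFactorization_surjective
  have hrange : LinearMap.range (LinearMap.funLeft ℂ ℂ (Set.rangeFactorization S.cls)) =
      S.classFun := by
    ext f
    constructor
    · rintro ⟨u, rfl⟩ g h hh
      simp only [LinearMap.funLeft_apply]
      congr 1
      exact Subtype.ext (S.cls_eq g h hh)
    · intro hf
      refine ⟨f ∘ Function.surjInv hπ, funext fun g => ?_⟩
      refine hf g _ (S.mem_cls_iff_cls_eq.2 ?_)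
      exact congrArg Subtype.val (Function.surjInv_eq hπ (Set.rangeFactorization S.cls g))
  rw [← hrange,
    LinearMap.finrank_range_of_inj (LinearMap.funLeft_injective_of_surjective _ _ _ hπ),
    Module.finrank_fintype_fun_eq_card, S.card_eq, Nat.card_eq_fintype_card]

theorem sum_smul_superchar_mul_superchar_inv (c : S.parts → ℂ) (Y : S.parts) :
    ∑ g, (∑ X, c X • S.superchar X) g * S.superchar Y g⁻¹ =
      c Y * (Fintype.card G * S.superchar Y 1) := by
  classical
  simp only [Finset.sum_apply, Pi.smul_apply, smul_eq_mul, Finset.sum_mul]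
  rw [Finset.sum_comm]
  simp only [mul_assoc, ← Finset.mul_sum]
  rw [Finset.sum_eq_single Y]
  · rw [S.sum_superchar_mul_superchar_inv Y.2 Y.2, if_pos rfl]
  · intro X _ hXY
    rw [S.sum_superchar_mul_superchar_inv X.2 Y.2, if_neg (Subtype.coe_ne_coe.2 hXY), mul_zero]
  · simp

theorem linearIndependent_superchar : LinearIndependent ℂ fun X : S.parts => S.superchar X := by
  rw [Fintype.linearIndependent_iff]
  intro c hc Y
  have h := S.sum_smul_superchar_mul_superchar_inv c Y
  rw [hc] at h
  simp only [Pi.zero_apply, zero_mul, Finset.sum_const_zero] at h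
  exact (mul_eq_zero.1 h.symm).resolve_right
    (mul_ne_zero (Nat.cast_ne_zero.2 Fintype.card_ne_zero) (S.superchar_one_ne_zero Y.2))

theorem span_superchar :
    Submodule.span ℂ (Set.range fun X : S.parts => S.superchar X) = S.classFun :=
  Submodule.eq_of_le_of_finrank_eq
    (Submodule.span_le.2 (Set.range_subset_iff.2 fun X => S.superchar_mem_classFun X.2))
    (by rw [finrank_span_eq_card S.linearIndependent_superchar, finrank_classFun,
      Fintype.card_coe])

theorem eq_sum_superchar {f : G → ℂ} (hf : f ∈ S.classFun) :
    f = ∑ X : S.parts, ((∑ g, f g * S.superchar X g⁻¹) /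
      (Fintype.card G * S.superchar X 1)) • S.superchar X := by
  rw [← S.span_superchar, Submodule.mem_span_range_iff_exists_fun] at hf
  obtain ⟨c, rfl⟩ := hf
  refine Finset.sum_congr rfl fun Y _ => ?_
  rw [S.sum_smul_superchar_mul_superchar_inv, mul_div_cancel_right₀ _
    (mul_ne_zero (Nat.cast_ne_zero.2 Fintype.card_ne_zero) (S.superchar_one_ne_zero Y.2))]

theorem cls_eq_of_forall_superchar_eq {a b : G}
    (h : ∀ X ∈ S.parts, S.superchar X a = S.superchar X b) : S.cls a = S.cls b := by
  obtain ⟨c, hc⟩ := (Submodule.mem_span_range_iff_exists_fun ℂ).1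
    (S.span_superchar ▸ S.indicator_cls_mem_classFun a)
  have hab : (S.cls a).indicator (1 : G → ℂ) b = (S.cls a).indicator 1 a := by
    simp only [← hc, Finset.sum_apply, Pi.smul_apply, h _ (Subtype.prop _)]
  rw [Set.indicator_of_mem (S.mem_cls a), Pi.one_apply] at hab
  exact (S.cls_eq a b (Set.mem_of_indicator_ne_zero (by rw [hab]; exact one_ne_zero))).symm

theorem sum_superchar_inv_mul_superchar_div {z : G} (hz : z ∈ S.centerSet) :
    ∑ X : S.parts, S.superchar X z⁻¹ * S.superchar X z / S.superchar X 1 = Fintype.card G := by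
  have hpair (φ : G → ℂ) : ∑ g, (S.cls z).indicator 1 g * φ g⁻¹ = φ z⁻¹ := by
    rw [Fintype.sum_eq_single z fun g hg => ?_]
    · rw [Set.indicator_of_mem (S.mem_cls z), Pi.one_apply, one_mul]
    · rw [Set.indicator_of_notMem (by rw [show S.cls z = {z} from hz]; exact hg), zero_mul]
  have hexp := congrFun (S.eq_sum_superchar (S.indicator_cls_mem_classFun z)) z
  simp only [Finset.sum_apply, Pi.smul_apply, smul_eq_mul, hpair,
    Set.indicator_of_mem (S.mem_cls z), Pi.one_apply] at hexp
  rw [← mul_one (Fintype.card G : ℂ), hexp, Finset.mul_sum]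
  refine Finset.sum_congr rfl fun X _ => ?_
  have hX1 := S.superchar_one_ne_zero X.2
  have hcard : (Fintype.card G : ℂ) ≠ 0 := Nat.cast_ne_zero.2 Fintype.card_ne_zero
  field_simp

theorem sum_superchar_one : ∑ X : S.parts, S.superchar X 1 = Fintype.card G := by
  rw [← S.sum_superchar_inv_mul_superchar_div S.cls_one]
  refine Finset.sum_congr rfl fun X _ => ?_
  rw [inv_one, mul_div_cancel_right₀ _ (S.superchar_one_ne_zero X.2)]

theorem norm_superchar_eq_of_mem_centerSet {z : G} (hz : z ∈ S.centerSet) (X : S.parts) :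
    ‖S.superchar X z‖ = ‖S.superchar X 1‖ := by
  have hle (X : S.parts) : ‖S.superchar X z‖ ≤ ‖S.superchar X 1‖ := S.norm_superchar_le X.2 z
  have hdeg : ∑ X : S.parts, ‖S.superchar X 1‖ = Fintype.card G := by
    have h : ((∑ X : S.parts, ‖S.superchar X 1‖ : ℝ) : ℂ) = Fintype.card G := by
      rw [Complex.ofReal_sum, ← S.sum_superchar_one]
      exact Finset.sum_congr rfl fun X _ => (S.superchar_one_eq_norm X.2).symm
    exact_mod_cast h
  have hge : (Fintype.card G : ℝ) ≤ ∑ X : S.parts, ‖S.superchar X z‖ :=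
    calc (Fintype.card G : ℝ)
        = ‖∑ X : S.parts, S.superchar X z⁻¹ * S.superchar X z / S.superchar X 1‖ := by
          rw [S.sum_superchar_inv_mul_superchar_div hz, Complex.norm_natCast]
      _ ≤ ∑ X : S.parts, ‖S.superchar X z⁻¹ * S.superchar X z / S.superchar X 1‖ :=
          norm_sum_le _ _
      _ ≤ ∑ X : S.parts, ‖S.superchar X z‖ := Finset.sum_le_sum fun X _ => by
          rw [norm_div, norm_mul, div_le_iff₀ (norm_pos_iff.2 (S.superchar_one_ne_zero X.2)),
            mul_comm]
          exact mul_le_mul_of_nonneg_left (S.norm_superchar_le X.2 z⁻¹) (norm_nonneg _)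
  exact (Finset.sum_eq_sum_iff_of_le fun X _ => hle X).1
    (le_antisymm (Finset.sum_le_sum fun X _ => hle X) (hdeg ▸ hge)) X (Finset.mem_univ X)

theorem superchar_ne_zero_of_mem_centerSet {z : G} (hz : z ∈ S.centerSet) (hX : X ∈ S.parts) :
    S.superchar X z ≠ 0 := by
  rw [← norm_pos_iff, S.norm_superchar_eq_of_mem_centerSet hz ⟨X, hX⟩, norm_pos_iff]
  exact S.superchar_one_ne_zero hX

theorem eq_one_of_forall_mem_charKer {d : G}
    (hd : ∀ X ∈ S.parts, d ∈ charKer (S.superchar X)) : d = 1 := by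
  have hcls : S.cls d = S.cls 1 :=
    S.cls_eq_of_forall_superchar_eq fun X hX => by simpa using hd X hX 1
  simpa [hcls, S.cls_one] using S.mem_cls d

theorem derived_eq_bot_of_forall_le_charKer
    (h : ∀ X ∈ S.parts, S.derived ≤ charKer (S.superchar X)) : S.derived = ⊥ :=
  (Subgroup.eq_bot_iff_forall _).2 fun _ hd =>
    S.eq_one_of_forall_mem_charKer fun X hX => h X hX hd

theorem centerSet_eq_univ_of_derived_eq_bot (h : S.derived = ⊥) : S.centerSet = Set.univ :=
  Set.eq_univ_of_forall fun w => Set.eq_singleton_iff_unique_mem.2 ⟨S.mem_cls w, fun k hk => by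
    have hmem : w⁻¹ * k ∈ S.derived :=
      Subgroup.subset_closure ⟨w, Subgroup.mem_top w, k, hk, rfl⟩
    rw [h, Subgroup.mem_bot, inv_mul_eq_one] at hmem
    exact hmem.symm⟩

end SCT

/-- if `G` is not `S`-abelian and `(G,N)` is an `S`-GCP, then `Z(S) ≤ N`. -/
theorem centerSet_subset_of_isGCP (S : SCT G) (N : Subgroup G)
    (hab : S.centerSet ≠ Set.univ) (h : S.IsGCP N) : S.centerSet ⊆ (N : Set G) := by
  intro z hz
  by_contra hzN
  refine hab (S.centerSet_eq_univ_of_derived_eq_bot (S.derived_eq_bot_of_forall_le_charKer ?_))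
  intro X hX
  by_contra hle
  exact S.superchar_ne_zero_of_mem_centerSet hz hX (h.2 z hzN _ ⟨⟨X, hX, rfl⟩, hle⟩)
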